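/- arXiv:1708.08812 — 9 statements merged into one kernel-verified Lean document; each statement's English description precedes it below -/
import Mathlib

section
/- Let φ₀, φ₁, φ₂ : ℝ → Matrix (Fin n) (Fin n) ℂ be differentiable functions satisfying the symmetric Nahm system dφ₀/dt = -½[φ₁,φ₀], dφ₁/dt = [φ₀,φ₂], dφ₂/dt = ½[φ₁,φ₂] for all t. Then for every z ∈ ℂ the characteristic polynomial of φ(z,t) = φ₀(t) + z·φ₁(t) + z²·φ₂(t) is independent of t; that is, for all s, t ∈ ℝ, charpoly(φ(z,s)) = charpoly(φ(z,t)). In particular the coefficients of the characteristic polynomial of φ(z,·) are conserved quantities of Nahm's equations. -/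
/-!
With `A = ½ φ₁ + z φ₂`, the symmetric Nahm system says exactly that `φ = φ₀ + z φ₁ + z² φ₂`
satisfies the Lax equation `dφ/dt = [φ, A]`, and so does `x - φ` for every scalar `x`.
By Jacobi's formula, `d/dt det N = tr (adj N · [N, A]) = 0`, since `adj N · N = N · adj N`
and the trace is cyclic. Hence every value `det (x - φ)` of the characteristic polynomial
is constant in `t`.
-/

open Matrix Finset

namespace Matrix

variable {m : Type*} [Fintype m] [DecidableEq m]

section Algebra

variable {R : Type*} [CommRing R]

theorem det_updateCol_eq_sum (M : Matrix m m R) (i : m) (c : m → R) :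
    (M.updateCol i c).det
      = ∑ σ : Equiv.Perm m, ((σ.sign : ℤ) : R) * (c (σ i) * ∏ j ∈ univ.erase i, M (σ j) j) := by
  rw [det_apply']
  refine sum_congr rfl fun σ _ => ?_
  rw [← mul_prod_erase _ _ (mem_univ i), updateCol_self]
  congr 2
  exact prod_congr rfl fun j hj => updateCol_ne (ne_of_mem_erase hj)

theorem trace_adjugate_mul (M N : Matrix m m R) :
    trace (adjugate M * N) = ∑ i, (M.updateCol i fun a => N a i).det := by
  refine sum_congr rfl fun i _ => ?_
  rw [← cramer_apply, cramer_eq_adjugate_mulVec]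
  rfl

theorem trace_adjugate_mul_lie (M A : Matrix m m R) : trace (adjugate M * ⁅M, A⁆) = 0 := by
  rw [Ring.lie_def, Matrix.mul_sub, trace_sub, ← Matrix.mul_assoc, adjugate_mul,
    ← Matrix.mul_assoc, trace_mul_cycle, mul_adjugate, sub_self]

end Algebra

section Calculus

theorem hasDerivAt_det {𝕜 R : Type*} [NontriviallyNormedField 𝕜] [NormedCommRing R]
    [NormedAlgebra 𝕜 R] {M : 𝕜 → Matrix m m R} {M' : Matrix m m R} {t : 𝕜}
    (h : ∀ i j, HasDerivAt (fun s => M s i j) (M' i j) t) :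
    HasDerivAt (fun s => (M s).det) (trace (adjugate (M t) * M')) t := by
  have hsum := HasDerivAt.fun_sum (u := univ) fun (σ : Equiv.Perm m) _ =>
    (HasDerivAt.fun_finsetProd (u := univ) fun i _ => h (σ i) i).const_mul ((σ.sign : ℤ) : R)
  rw [show (fun s => (M s).det) = _ from funext fun s => det_apply' (M s)]
  refine hsum.congr_deriv ?_
  simp only [trace_adjugate_mul, det_updateCol_eq_sum, smul_eq_mul, mul_sum]
  rw [sum_comm]
  exact sum_congr rfl fun σ _ => sum_congr rfl fun i _ => by ring

variable {𝕜 : Type*} [RCLike 𝕜]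

theorem det_eq_of_hasDerivAt_lie {R : Type*} [NormedCommRing R] [NormedAlgebra 𝕜 R]
    {M A : 𝕜 → Matrix m m R} (h : ∀ t i j, HasDerivAt (fun s => M s i j) (⁅M t, A t⁆ i j) t)
    (s t : 𝕜) : (M s).det = (M t).det := by
  have hzero : ∀ u, HasDerivAt (fun s => (M s).det) 0 u := fun u => by
    simpa only [trace_adjugate_mul_lie] using hasDerivAt_det (h u)
  exact is_const_of_deriv_eq_zero (fun u => (hzero u).differentiableAt)
    (fun u => (hzero u).deriv) s t

theorem charpoly_eq_of_hasDerivAt_lie {K : Type*} [NormedField K] [NormedAlgebra 𝕜 K]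
    [Infinite K]
    {M A : 𝕜 → Matrix m m K} (h : ∀ t i j, HasDerivAt (fun s => M s i j) (⁅M t, A t⁆ i j) t)
    (s t : 𝕜) : (M s).charpoly = (M t).charpoly := by
  refine Polynomial.funext fun x => ?_
  simp only [eval_charpoly]
  refine det_eq_of_hasDerivAt_lie (M := fun u => scalar m x - M u) (A := A) (fun u i j => ?_) s t
  have hlie : ⁅scalar m x - M u, A u⁆ = -⁅M u, A u⁆ := by
    rw [Ring.lie_def, Ring.lie_def, sub_mul, mul_sub, (scalar_commute x (Commute.all x) (A u)).eq]
    abel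
  rw [hlie, neg_apply, ← zero_sub]
  exact (hasDerivAt_const u _).sub (h u i j)

end Calculus

end Matrix

theorem nahm_lax_identity {K A : Type*} [Field K] [CharZero K] [Ring A] [Algebra K A]
    (z : K) (a b c : A) :
    (-(1/2) : K) • ⁅b, a⁆ + z • ⁅a, c⁆ + z ^ 2 • ((1/2 : K) • ⁅b, c⁆)
      = ⁅a + z • b + z ^ 2 • c, (1/2 : K) • b + z • c⁆ := by
  simp only [Ring.lie_def, add_mul, mul_add, smul_mul_assoc, mul_smul_comm, smul_sub, smul_add,
    smul_smul]
  module

/-- Along the symmetric Nahm flow, the characteristic polynomial of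
`φ(z,t) = φ₀(t) + z φ₁(t) + z² φ₂(t)` is independent of `t`: its coefficients
are conserved quantities of Nahm's equations. -/
theorem nahm_charpoly_conserved {n : ℕ}
    (φ₀ φ₁ φ₂ : ℝ → Matrix (Fin n) (Fin n) ℂ)
    (hφ₀ : ∀ i j, Differentiable ℝ fun t => φ₀ t i j)
    (hφ₁ : ∀ i j, Differentiable ℝ fun t => φ₁ t i j)
    (hφ₂ : ∀ i j, Differentiable ℝ fun t => φ₂ t i j)
    (h0 : ∀ t i j, deriv (fun s => φ₀ s i j) t
        = ((-(1/2) : ℂ) • (φ₁ t * φ₀ t - φ₀ t * φ₁ t)) i j)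
    (h1 : ∀ t i j, deriv (fun s => φ₁ s i j) t
        = (φ₀ t * φ₂ t - φ₂ t * φ₀ t) i j)
    (h2 : ∀ t i j, deriv (fun s => φ₂ s i j) t
        = (((1/2) : ℂ) • (φ₁ t * φ₂ t - φ₂ t * φ₁ t)) i j) :
    ∀ z : ℂ, ∀ s t : ℝ,
      (φ₀ s + z • φ₁ s + z ^ 2 • φ₂ s).charpoly
        = (φ₀ t + z • φ₁ t + z ^ 2 • φ₂ t).charpoly := by
  intro z s t
  refine charpoly_eq_of_hasDerivAt_lie (M := fun u => φ₀ u + z • φ₁ u + z ^ 2 • φ₂ u)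
    (A := fun u => (1/2 : ℂ) • φ₁ u + z • φ₂ u) (fun u i j => ?_) s t
  have hd₀ : HasDerivAt (fun v => φ₀ v i j) (((-(1/2) : ℂ) • ⁅φ₁ u, φ₀ u⁆) i j) u := by
    rw [Ring.lie_def, ← h0]; exact (hφ₀ i j u).hasDerivAt
  have hd₁ : HasDerivAt (fun v => φ₁ v i j) (⁅φ₀ u, φ₂ u⁆ i j) u := by
    rw [Ring.lie_def, ← h1]; exact (hφ₁ i j u).hasDerivAt
  have hd₂ : HasDerivAt (fun v => φ₂ v i j) (((1/2 : ℂ) • ⁅φ₁ u, φ₂ u⁆) i j) u := by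
    rw [Ring.lie_def, ← h2]; exact (hφ₂ i j u).hasDerivAt
  rw [← nahm_lax_identity z (φ₀ u) (φ₁ u) (φ₂ u)]
  simpa only [Matrix.add_apply, Matrix.smul_apply, smul_eq_mul, Pi.add_def] using
    (hd₀.add (hd₁.const_mul z)).add (hd₂.const_mul (z ^ 2))
end

section
/- Let φ₀, φ₁, φ₂, φ₃ : ℝ → Matrix (Fin n) (Fin n) ℂ be differentiable functions satisfying the system dφ₀/dt = [φ₀,φ₁], dφ₁/dt = [φ₀,φ₂], dφ₂/dt = [φ₀,φ₃], dφ₃/dt = 0 for all t. Then for every z ∈ ℂ with z ≠ 0 and every t ∈ ℝ, the function φ(z,t) = φ₀(t) + z·φ₁(t) + z²·φ₂(t) + z³·φ₃(t) satisfies the Lax equation d/dt φ(z,t) = [φ₀(t)/z, φ(z,t)]. -/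
/-!
Expanding the bracket, `[z⁻¹ φ₀, φ₀ + z φ₁ + z² φ₂ + z³ φ₃] = [φ₀, φ₁] + z [φ₀, φ₂] + z² [φ₀, φ₃]`
since `[φ₀, φ₀] = 0`; by the flow equations this is exactly the derivative of
`φ₀ + z φ₁ + z² φ₂ + z³ φ₃`, term by term.
-/

theorem inv_smul_commutator_cubic {K A : Type*} [Field K] [Ring A] [Algebra K A]
    {z : K} (hz : z ≠ 0) (a b c d : A) :
    (z⁻¹ • a) * (a + z • b + z ^ 2 • c + z ^ 3 • d)
        - (a + z • b + z ^ 2 • c + z ^ 3 • d) * (z⁻¹ • a)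
      = (a * b - b * a) + z • (a * c - c * a) + z ^ 2 • (a * d - d * a) := by
  simp only [mul_add, add_mul, smul_mul_assoc, mul_smul_comm, smul_smul, smul_sub, smul_add]
  match_scalars <;> field_simp
  simp

/-- If `(φ₀, φ₁, φ₂, φ₃)` satisfies the system
`dφ₀/dt = [φ₀,φ₁]`, `dφ₁/dt = [φ₀,φ₂]`, `dφ₂/dt = [φ₀,φ₃]`, `dφ₃/dt = 0`,
then for every `z ≠ 0` the matrix `φ(z,t) = φ₀ + z φ₁ + z² φ₂ + z³ φ₃` satisfies
the Lax equation `dφ/dt = [φ₀/z, φ]`.  Derivatives are taken entrywise. -/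
theorem nahm_flow_degree_lax {n : ℕ}
    (φ₀ φ₁ φ₂ φ₃ : ℝ → Matrix (Fin n) (Fin n) ℂ)
    (hφ₀ : ∀ i j, Differentiable ℝ fun t => φ₀ t i j)
    (hφ₁ : ∀ i j, Differentiable ℝ fun t => φ₁ t i j)
    (hφ₂ : ∀ i j, Differentiable ℝ fun t => φ₂ t i j)
    (hφ₃ : ∀ i j, Differentiable ℝ fun t => φ₃ t i j)
    (h0 : ∀ t i j, deriv (fun s => φ₀ s i j) t
        = (φ₀ t * φ₁ t - φ₁ t * φ₀ t) i j)
    (h1 : ∀ t i j, deriv (fun s => φ₁ s i j) t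
        = (φ₀ t * φ₂ t - φ₂ t * φ₀ t) i j)
    (h2 : ∀ t i j, deriv (fun s => φ₂ s i j) t
        = (φ₀ t * φ₃ t - φ₃ t * φ₀ t) i j)
    (h3 : ∀ t i j, deriv (fun s => φ₃ s i j) t = 0) :
    ∀ z : ℂ, z ≠ 0 → ∀ t : ℝ, ∀ i j,
      deriv (fun s => (φ₀ s + z • φ₁ s + z ^ 2 • φ₂ s + z ^ 3 • φ₃ s) i j) t
        = ((z⁻¹ • φ₀ t) * (φ₀ t + z • φ₁ t + z ^ 2 • φ₂ t + z ^ 3 • φ₃ t)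
            - (φ₀ t + z • φ₁ t + z ^ 2 • φ₂ t + z ^ 3 • φ₃ t) * (z⁻¹ • φ₀ t)) i j := by
  intro z hz t i j
  have hφ :
      HasDerivAt (fun s => (φ₀ s + z • φ₁ s + z ^ 2 • φ₂ s + z ^ 3 • φ₃ s) i j)
        (deriv (fun s => φ₀ s i j) t + z • deriv (fun s => φ₁ s i j) t
          + z ^ 2 • deriv (fun s => φ₂ s i j) t + z ^ 3 • deriv (fun s => φ₃ s i j) t) t :=
    (((hφ₀ i j t).hasDerivAt.add ((hφ₁ i j t).hasDerivAt.const_smul z)).add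
      ((hφ₂ i j t).hasDerivAt.const_smul (z ^ 2))).add ((hφ₃ i j t).hasDerivAt.const_smul (z ^ 3))
  rw [hφ.deriv, inv_smul_commutator_cubic hz, h0, h1, h2, h3, smul_zero, add_zero]
  rfl
end

section
/- Let a₀, a₁, a₂, c₀, c₁ : ℝ → ℂ be differentiable functions with c₁(t) ≠ 0 for all t, satisfying dc₀/dt = 2(c₁a₀ - a₁c₀) and dc₁/dt = -2a₂c₀. Then the function z₀ = -c₀/c₁ is differentiable and satisfies dz₀/dt = -2(a₀ + a₁z₀ + a₂z₀²). -/
/-! Differentiating `c₀ + c₁ z₀ = 0` gives `c₁ z₀' = -(c₀' + c₁' z₀)`. Substituting the flow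
equations and `c₀ = -c₁ z₀`, the right-hand side becomes `-2 c₁ (a₀ + a₁ z₀ + a₂ z₀²)`. -/

variable {𝕜 𝕜' : Type*} [NontriviallyNormedField 𝕜] [NontriviallyNormedField 𝕜']
  [NormedAlgebra 𝕜 𝕜']

theorem hasDerivAt_linear_root {c₀ c₁ : 𝕜 → 𝕜'} {c₀' c₁' : 𝕜'} {t : 𝕜}
    (hc₀ : HasDerivAt c₀ c₀' t) (hc₁ : HasDerivAt c₁ c₁' t) (hne : c₁ t ≠ 0) :
    HasDerivAt (fun s => -c₀ s / c₁ s) (-(c₀' + c₁' * (-c₀ t / c₁ t)) / c₁ t) t := by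
  convert hc₀.fun_neg.fun_div hc₁ hne using 1
  field_simp
  ring

theorem nahm_flow_rank_two_vector_field_general
    (a₀ a₁ a₂ c₀ c₁ : ℝ → ℂ)
    (hc₀ : Differentiable ℝ c₀) (hc₁ : Differentiable ℝ c₁)
    (hne : ∀ t, c₁ t ≠ 0)
    (h0 : ∀ t, deriv c₀ t = 2 * (c₁ t * a₀ t - a₁ t * c₀ t))
    (h1 : ∀ t, deriv c₁ t = -2 * a₂ t * c₀ t) :
    Differentiable ℝ (fun t => -c₀ t / c₁ t) ∧
    ∀ t, deriv (fun s => -c₀ s / c₁ s) t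
        = -2 * (a₀ t + a₁ t * (-c₀ t / c₁ t) + a₂ t * (-c₀ t / c₁ t) ^ 2) := by
  have hz₀ (t : ℝ) := hasDerivAt_linear_root
    (hc₀ t).hasDerivAt (hc₁ t).hasDerivAt (hne t)
  refine ⟨fun t => (hz₀ t).differentiableAt, fun t => ?_⟩
  rw [(hz₀ t).deriv, h0, h1]
  field_simp [hne t]
  ring

/-- The Nahm flow on the moduli space of rank-2 degree `-1` co-Higgs bundles:
if `dc₀/dt = 2(c₁a₀ - a₁c₀)` and `dc₁/dt = -2a₂c₀` with `c₁` never zero, then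
`z₀ = -c₀/c₁` satisfies `dz₀/dt = -2(a₀ + a₁ z₀ + a₂ z₀²)`. -/
theorem nahm_flow_rank_two_vector_field
    (a₀ a₁ a₂ c₀ c₁ : ℝ → ℂ)
    (ha₀ : Differentiable ℝ a₀) (ha₁ : Differentiable ℝ a₁)
    (ha₂ : Differentiable ℝ a₂)
    (hc₀ : Differentiable ℝ c₀) (hc₁ : Differentiable ℝ c₁)
    (hne : ∀ t, c₁ t ≠ 0)
    (h0 : ∀ t, deriv c₀ t = 2 * (c₁ t * a₀ t - a₁ t * c₀ t))
    (h1 : ∀ t, deriv c₁ t = -2 * a₂ t * c₀ t) :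
    Differentiable ℝ (fun t => -c₀ t / c₁ t) ∧
    ∀ t, deriv (fun s => -c₀ s / c₁ s) t
        = -2 * (a₀ t + a₁ t * (-c₀ t / c₁ t) + a₂ t * (-c₀ t / c₁ t) ^ 2) :=
  nahm_flow_rank_two_vector_field_general a₀ a₁ a₂ c₀ c₁ hc₀ hc₁ hne h0 h1
end

section
/- Let T₀, T₁, T₂, T₃ be skew-Hermitian complex n×n matrices (Tⱼᴴ = -Tⱼ for j = 0,1,2,3) satisfying [T₀,T₁] = [T₂,T₃], [T₀,T₂] = [T₃,T₁], and [T₀,T₃] = [T₁,T₂]. Then all the matrices commute pairwise: [Tᵢ,Tⱼ] = 0 for all 0 ≤ i, j ≤ 3. -/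
open Matrix

private lemma trace_comm_mul {n : ℕ} (A B C : Matrix (Fin n) (Fin n) ℂ) :
    trace ((A * B - B * A) * C) = trace (A * (B * C - C * B)) := by
  rw [sub_mul, mul_sub, trace_sub, trace_sub]
  congr 1
  · rw [mul_assoc]
  · rw [trace_mul_comm, ← mul_assoc, trace_mul_comm]

private lemma trace_conjT_self {n : ℕ} (A : Matrix (Fin n) (Fin n) ℂ) :
    trace (Aᴴ * A) = ((∑ i, ∑ j, Complex.normSq (A j i) : ℝ) : ℂ) := by
  simp only [trace, diag, mul_apply, conjTranspose_apply, Complex.ofReal_sum]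
  refine Finset.sum_congr rfl fun i _ => Finset.sum_congr rfl fun j _ => ?_
  rw [Complex.normSq_eq_conj_mul_self]
  rfl

private lemma eq_zero_of_trace {n : ℕ} (A : Matrix (Fin n) (Fin n) ℂ)
    (h : (∑ i, ∑ j, Complex.normSq (A j i) : ℝ) = 0) : A = 0 := by
  have h' := (Finset.sum_eq_zero_iff_of_nonneg (fun i _ =>
    Finset.sum_nonneg fun j _ => Complex.normSq_nonneg _)).1 h
  ext j i
  have := (Finset.sum_eq_zero_iff_of_nonneg
    (fun j _ => Complex.normSq_nonneg (A j i))).1 (h' i (Finset.mem_univ i)) j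
    (Finset.mem_univ j)
  simpa [Complex.normSq_eq_zero] using this

/-- In a compact Lie algebra there are no non-trivial fixed points of the Nahm
flow: if skew-Hermitian matrices `T₀, T₁, T₂, T₃` satisfy
`[T₀,T₁] = [T₂,T₃]`, `[T₀,T₂] = [T₃,T₁]`, `[T₀,T₃] = [T₁,T₂]`, then they all
commute pairwise. -/
theorem skew_hermitian_nahm_fixed_point_commutes {n : ℕ}
    (T : Fin 4 → Matrix (Fin n) (Fin n) ℂ)
    (hskew : ∀ j, (T j)ᴴ = -(T j))
    (h1 : T 0 * T 1 - T 1 * T 0 = T 2 * T 3 - T 3 * T 2)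
    (h2 : T 0 * T 2 - T 2 * T 0 = T 3 * T 1 - T 1 * T 3)
    (h3 : T 0 * T 3 - T 3 * T 0 = T 1 * T 2 - T 2 * T 1) :
    ∀ i j, T i * T j - T j * T i = 0 := by
  set A1 := T 0 * T 1 - T 1 * T 0 with hA1
  set A2 := T 0 * T 2 - T 2 * T 0 with hA2
  set A3 := T 0 * T 3 - T 3 * T 0 with hA3
  -- commutators are skew-Hermitian
  have hskewC : ∀ a b : Fin 4, (T a * T b - T b * T a)ᴴ = -(T a * T b - T b * T a) := by
    intro a b
    simp [conjTranspose_sub, conjTranspose_mul, hskew, mul_comm]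
  -- Jacobi: trace sum vanishes
  have jac : trace (A1 * (T 2 * T 3 - T 3 * T 2)) + trace (A2 * (T 3 * T 1 - T 1 * T 3))
      + trace (A3 * (T 1 * T 2 - T 2 * T 1)) = 0 := by
    rw [hA1, hA2, hA3, trace_comm_mul, trace_comm_mul, trace_comm_mul,
      ← trace_add, ← trace_add, ← mul_add, ← mul_add]
    have : (T 1 * (T 2 * T 3 - T 3 * T 2) - (T 2 * T 3 - T 3 * T 2) * T 1)
        + (T 2 * (T 3 * T 1 - T 1 * T 3) - (T 3 * T 1 - T 1 * T 3) * T 2)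
        + (T 3 * (T 1 * T 2 - T 2 * T 1) - (T 1 * T 2 - T 2 * T 1) * T 3) = 0 := by
      noncomm_ring
    rw [this, mul_zero, trace_zero]
  -- norms
  have key : ((∑ i, ∑ j, Complex.normSq (A1 j i) : ℝ) : ℂ)
      + ((∑ i, ∑ j, Complex.normSq (A2 j i) : ℝ) : ℂ)
      + ((∑ i, ∑ j, Complex.normSq (A3 j i) : ℝ) : ℂ) = 0 := by
    rw [← trace_conjT_self, ← trace_conjT_self, ← trace_conjT_self]
    have e1 : A1ᴴ = -A1 := by rw [hA1]; exact hskewC 0 1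
    have e2 : A2ᴴ = -A2 := by rw [hA2]; exact hskewC 0 2
    have e3 : A3ᴴ = -A3 := by rw [hA3]; exact hskewC 0 3
    rw [e1, e2, e3, neg_mul, neg_mul, neg_mul, trace_neg, trace_neg, trace_neg]
    have r1 : A1 * A1 = A1 * (T 2 * T 3 - T 3 * T 2) := by nth_rewrite 2 [h1]; rfl
    have r2 : A2 * A2 = A2 * (T 3 * T 1 - T 1 * T 3) := by nth_rewrite 2 [h2]; rfl
    have r3 : A3 * A3 = A3 * (T 1 * T 2 - T 2 * T 1) := by nth_rewrite 2 [h3]; rfl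
    rw [r1, r2, r3]
    rw [← neg_add, ← neg_add, jac, neg_zero]
  have keyR : (∑ i, ∑ j, Complex.normSq (A1 j i) : ℝ)
      + (∑ i, ∑ j, Complex.normSq (A2 j i) : ℝ)
      + (∑ i, ∑ j, Complex.normSq (A3 j i) : ℝ) = 0 := by
    exact_mod_cast key
  have nn : ∀ B : Matrix (Fin n) (Fin n) ℂ,
      0 ≤ (∑ i, ∑ j, Complex.normSq (B j i) : ℝ) := fun B =>
    Finset.sum_nonneg fun i _ => Finset.sum_nonneg fun j _ => Complex.normSq_nonneg _
  have z1 : A1 = 0 := eq_zero_of_trace _ (by nlinarith [nn A1, nn A2, nn A3])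
  have z2 : A2 = 0 := eq_zero_of_trace _ (by nlinarith [nn A1, nn A2, nn A3])
  have z3 : A3 = 0 := eq_zero_of_trace _ (by nlinarith [nn A1, nn A2, nn A3])
  have h01 : T 0 * T 1 - T 1 * T 0 = 0 := z1
  have h02 : T 0 * T 2 - T 2 * T 0 = 0 := z2
  have h03 : T 0 * T 3 - T 3 * T 0 = 0 := z3
  have h23 : T 2 * T 3 - T 3 * T 2 = 0 := by rw [← h1]; exact z1
  have h31 : T 3 * T 1 - T 1 * T 3 = 0 := by rw [← h2]; exact z2
  have h12 : T 1 * T 2 - T 2 * T 1 = 0 := by rw [← h3]; exact z3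
  have sym : ∀ a b : Fin 4, T a * T b - T b * T a = 0 → T b * T a - T a * T b = 0 := by
    intro a b h
    rw [← neg_sub, h, neg_zero]
  intro i j
  fin_cases i <;> fin_cases j <;>
    first
      | exact sub_self _
      | exact h01 | exact h02 | exact h03 | exact h23 | exact h31 | exact h12
      | exact sym _ _ h01 | exact sym _ _ h02 | exact sym _ _ h03
      | exact sym _ _ h23 | exact sym _ _ h31 | exact sym _ _ h12
end

section
/- Let ψ, φ₀, φ₁, φ₂ be complex n×n matrices satisfying the fixed-point equations [ψ,φ₀] = ½[φ₀,φ₁], [ψ,φ₁] = [φ₀,φ₂], [ψ,φ₂] = ½[φ₁,φ₂]. Then for every z ∈ ℂ the matrix φ₋(z) = -z·ψ + φ₀ + (z/2)·φ₁ commutes with φ(z) = φ₀ + z·φ₁ + z²·φ₂, i.e. [φ₋(z), φ(z)] = 0. -/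
/-- At a fixed point of the Nahm flow, the matrix
`φ₋(z) = -z ψ + φ₀ + (z/2) φ₁` commutes with the Higgs field
`φ(z) = φ₀ + z φ₁ + z² φ₂`. -/
theorem fixed_point_phi_minus_commutes {n : ℕ}
    (ψ φ₀ φ₁ φ₂ : Matrix (Fin n) (Fin n) ℂ)
    (h0 : ψ * φ₀ - φ₀ * ψ = ((1/2) : ℂ) • (φ₀ * φ₁ - φ₁ * φ₀))
    (h1 : ψ * φ₁ - φ₁ * ψ = φ₀ * φ₂ - φ₂ * φ₀)
    (h2 : ψ * φ₂ - φ₂ * ψ = ((1/2) : ℂ) • (φ₁ * φ₂ - φ₂ * φ₁)) :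
    ∀ z : ℂ,
      (-z • ψ + φ₀ + (z / 2) • φ₁) * (φ₀ + z • φ₁ + z ^ 2 • φ₂)
        - (φ₀ + z • φ₁ + z ^ 2 • φ₂) * (-z • ψ + φ₀ + (z / 2) • φ₁) = 0 := by
  intro z
  have e0 := eq_add_of_sub_eq h0
  have e1 := eq_add_of_sub_eq h1
  have e2 := eq_add_of_sub_eq h2
  simp only [add_mul, mul_add, smul_mul_assoc, mul_smul_comm, neg_smul, neg_mul, mul_neg, neg_neg, e0, e1, e2,
    smul_add, smul_sub, smul_smul]
  module
end

section
/- Let ψ, φ₀, φ₁, φ₂ be complex n×n matrices satisfying the fixed-point equations [ψ,φ₀] = ½[φ₀,φ₁], [ψ,φ₁] = [φ₀,φ₂], [ψ,φ₂] = ½[φ₁,φ₂], and for z ∈ ℂ set φ₋(z) = -z·ψ + φ₀ + (z/2)·φ₁, φ₊(z) = (1/2)·φ₁ + z·φ₂ + ψ, and φ(z) = φ₀ + z·φ₁ + z²·φ₂. Then for every z ∈ ℂ: (i) φ₋(z) + z·φ₊(z) = φ(z); (ii) [φ₊(z), φ(z)] = 0; and (iii) [φ₊(z), φ₋(z)] =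 0. -/
/-- At a fixed point of the Nahm flow, with
`φ₋(z) = -z ψ + φ₀ + (z/2) φ₁`, `φ₊(z) = φ₁/2 + z φ₂ + ψ` and
`φ(z) = φ₀ + z φ₁ + z² φ₂`, one has `φ₋ + z φ₊ = φ`, `[φ₊, φ] = 0` and
`[φ₊, φ₋] = 0`. -/
theorem fixed_point_lift_commutes {n : ℕ}
    (ψ φ₀ φ₁ φ₂ : Matrix (Fin n) (Fin n) ℂ)
    (h0 : ψ * φ₀ - φ₀ * ψ = ((1/2) : ℂ) • (φ₀ * φ₁ - φ₁ * φ₀))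
    (h1 : ψ * φ₁ - φ₁ * ψ = φ₀ * φ₂ - φ₂ * φ₀)
    (h2 : ψ * φ₂ - φ₂ * ψ = ((1/2) : ℂ) • (φ₁ * φ₂ - φ₂ * φ₁)) :
    ∀ z : ℂ,
      ((-z • ψ + φ₀ + (z / 2) • φ₁) + z • (((1/2) : ℂ) • φ₁ + z • φ₂ + ψ)
          = φ₀ + z • φ₁ + z ^ 2 • φ₂) ∧
      ((((1/2) : ℂ) • φ₁ + z • φ₂ + ψ) * (φ₀ + z • φ₁ + z ^ 2 • φ₂)
          - (φ₀ + z • φ₁ + z ^ 2 • φ₂) * (((1/2) : ℂ) • φ₁ + z • φ₂ + ψ) = 0) ∧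
      ((((1/2) : ℂ) • φ₁ + z • φ₂ + ψ) * (-z • ψ + φ₀ + (z / 2) • φ₁)
          - (-z • ψ + φ₀ + (z / 2) • φ₁) * (((1/2) : ℂ) • φ₁ + z • φ₂ + ψ) = 0) := by
  have e0 : ψ * φ₀ = φ₀ * ψ + ((1/2) : ℂ) • (φ₀ * φ₁ - φ₁ * φ₀) := by
    rw [← h0]; abel
  have e1 : ψ * φ₁ = φ₁ * ψ + (φ₀ * φ₂ - φ₂ * φ₀) := by
    rw [← h1]; abel
  have e2 : ψ * φ₂ = φ₂ * ψ + ((1/2) : ℂ) • (φ₁ * φ₂ - φ₂ * φ₁) := by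
    rw [← h2]; abel
  intro z
  refine ⟨by module, ?_, ?_⟩ <;>
  · simp only [add_mul, mul_add, smul_mul_assoc, mul_smul_comm, smul_smul,
      neg_smul, neg_mul, mul_neg, e0, e1, e2, smul_sub, smul_add]
    module
end

section
/- Let ψ, φ₁, φ₂ be traceless complex 2×2 matrices and let φ₀ = !![0,1;0,0] (the elementary nilpotent matrix E₁₂). Suppose the fixed-point equations [ψ,φ₀] = ½[φ₀,φ₁], [ψ,φ₁] = [φ₀,φ₂], [ψ,φ₂] = ½[φ₁,φ₂] hold and [φ₀,φ₁] ≠ 0. Then there exists a ∈ ℂ such that ψ = a·φ₀ - (1/2)·φ₁ and φ₂ = a·φ₁ - a²·φ₀. -/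
open Matrix

/-- Classification of rank-2 fixed points of the Nahm flow with non-nilpotent
Higgs field: if `ψ, φ₁, φ₂` are traceless `2×2` matrices, `φ₀ = E₁₂`, the
fixed-point equations hold and `[φ₀,φ₁] ≠ 0`, then there is `a ∈ ℂ` with
`ψ = a φ₀ - φ₁/2` and `φ₂ = a φ₁ - a² φ₀`. -/
theorem rank_two_fixed_point_classification
    (ψ φ₁ φ₂ : Matrix (Fin 2) (Fin 2) ℂ)
    (hψ : Matrix.trace ψ = 0)
    (hφ₁ : Matrix.trace φ₁ = 0)
    (hφ₂ : Matrix.trace φ₂ = 0)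
    (φ₀ : Matrix (Fin 2) (Fin 2) ℂ) (hφ₀ : φ₀ = !![0, 1; 0, 0])
    (h0 : ψ * φ₀ - φ₀ * ψ = ((1/2) : ℂ) • (φ₀ * φ₁ - φ₁ * φ₀))
    (h1 : ψ * φ₁ - φ₁ * ψ = φ₀ * φ₂ - φ₂ * φ₀)
    (h2 : ψ * φ₂ - φ₂ * ψ = ((1/2) : ℂ) • (φ₁ * φ₂ - φ₂ * φ₁))
    (hnc : φ₀ * φ₁ - φ₁ * φ₀ ≠ 0) :
    ∃ a : ℂ, ψ = a • φ₀ - ((1/2) : ℂ) • φ₁ ∧ φ₂ = a • φ₁ - a ^ 2 • φ₀ := by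
  subst hφ₀
  obtain ⟨p, q, r, s, rfl⟩ : ∃ p q r s, ψ = !![p, q; r, s] :=
    ⟨_, _, _, _, Matrix.eta_fin_two ψ⟩
  obtain ⟨b, c, d, b', rfl⟩ : ∃ b c d b', φ₁ = !![b, c; d, b'] :=
    ⟨_, _, _, _, Matrix.eta_fin_two φ₁⟩
  obtain ⟨e, f, g, e', rfl⟩ : ∃ e f g e', φ₂ = !![e, f; g, e'] :=
    ⟨_, _, _, _, Matrix.eta_fin_two φ₂⟩
  rw [Matrix.trace_fin_two_of] at hψ hφ₁ hφ₂
  have hs : s = -p := by linear_combination hψ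
  have hb' : b' = -b := by linear_combination hφ₁
  have he' : e' = -e := by linear_combination hφ₂
  subst hs hb' he'
  have e000 := Matrix.ext_iff.mpr h0 0 0
  have e001 := Matrix.ext_iff.mpr h0 0 1
  have e100 := Matrix.ext_iff.mpr h1 0 0
  have e101 := Matrix.ext_iff.mpr h1 0 1
  have e200 := Matrix.ext_iff.mpr h2 0 0
  have e201 := Matrix.ext_iff.mpr h2 0 1
  simp only [Matrix.sub_apply, Matrix.smul_apply, Matrix.mul_apply,
    Fin.sum_univ_two, Matrix.cons_val', Matrix.cons_val_zero, Matrix.cons_val_one,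
    Matrix.head_cons, Matrix.head_fin_const, Matrix.empty_val', Matrix.of_apply,
    Matrix.cons_val_fin_one, smul_eq_mul, mul_zero, zero_mul, mul_one, one_mul,
    add_zero, zero_add, sub_zero, zero_sub] at e000 e001 e100 e101 e200 e201
  -- from h0 : r = -d/2, p = -b/2
  have hr : r = -(d/2) := by linear_combination -e000
  have hp : p = -(b/2) := by linear_combination (1/2) * e001
  subst hr hp
  -- from h1 : e = a*b, g = a*d  with a = q + c/2
  have he : e = (q + c/2) * b := by linear_combination (1/2) * e101
  have hg : g = (q + c/2) * d := by linear_combination -e100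
  subst he hg
  -- from h2 and nondegeneracy : f = a*c - a^2
  have hbd : b ≠ 0 ∨ d ≠ 0 := by
    by_contra h
    push_neg at h
    obtain ⟨h1', h2'⟩ := h
    subst h1' h2'
    apply hnc
    ext i j
    fin_cases i <;> fin_cases j <;>
      simp [Matrix.mul_apply, Fin.sum_univ_two]
  have hf : f = (q + c/2) * c - (q + c/2) ^ 2 := by
    rcases hbd with hb0 | hd0
    · have key : b * f = b * ((q + c/2) * c - (q + c/2) ^ 2) := by
        linear_combination (-1/2) * e201
      exact mul_left_cancel₀ hb0 key
    · have key : d * f = d * ((q + c/2) * c - (q + c/2) ^ 2) := by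
        linear_combination e200
      exact mul_left_cancel₀ hd0 key
  subst hf
  refine ⟨q + c/2, ?_, ?_⟩ <;> ext i j <;> fin_cases i <;> fin_cases j <;>
    simp [Matrix.smul_apply, Matrix.sub_apply] <;> ring
end

section
/- Let φ₀, φ₁ be arbitrary complex n×n matrices and a ∈ ℂ, and define ψ = a·φ₀ - (1/2)·φ₁ and φ₂ = a·φ₁ - a²·φ₀. Then the fixed-point equations hold: [ψ,φ₀] = ½[φ₀,φ₁], [ψ,φ₁] = [φ₀,φ₂], and [ψ,φ₂] = ½[φ₁,φ₂]. -/
/-- Existence of fixed points of the Nahm flow: for arbitrary matrices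
`φ₀, φ₁` and `a ∈ ℂ`, setting `ψ = a φ₀ - φ₁/2` and `φ₂ = a φ₁ - a² φ₀`
gives a solution of the fixed-point equations. -/
theorem fixed_point_construction {n : ℕ}
    (φ₀ φ₁ : Matrix (Fin n) (Fin n) ℂ) (a : ℂ)
    (ψ φ₂ : Matrix (Fin n) (Fin n) ℂ)
    (hψ : ψ = a • φ₀ - ((1/2) : ℂ) • φ₁)
    (hφ₂ : φ₂ = a • φ₁ - a ^ 2 • φ₀) :
    (ψ * φ₀ - φ₀ * ψ = ((1/2) : ℂ) • (φ₀ * φ₁ - φ₁ * φ₀)) ∧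
    (ψ * φ₁ - φ₁ * ψ = φ₀ * φ₂ - φ₂ * φ₀) ∧
    (ψ * φ₂ - φ₂ * ψ = ((1/2) : ℂ) • (φ₁ * φ₂ - φ₂ * φ₁)) := by
  subst hψ hφ₂
  refine ⟨?_, ?_, ?_⟩ <;>
  · simp only [sub_mul, mul_sub, smul_mul_assoc, mul_smul_comm, smul_sub, smul_smul]
    ring_nf
    try module
end

section
/- Let ψ, φ₁, φ₂ be traceless complex 2×2 matrices and φ₀ = !![0,1;0,0]. Suppose the fixed-point equations [ψ,φ₀] = ½[φ₀,φ₁], [ψ,φ₁] = [φ₀,φ₂], [ψ,φ₂] = ½[φ₁,φ₂] hold and [φ₀,φ₁] = 0. Then the Higgs field φ(z) = φ₀ + z·φ₁ + z²·φ₂ is nilpotent for every z ∈ ℂ: φ(z)² = 0. -/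
open Matrix

/-- A traceless `2×2` matrix commuting with `E₁₂` is a multiple of `E₁₂`. -/
lemma centralizer_E12 (M : Matrix (Fin 2) (Fin 2) ℂ)
    (ht : Matrix.trace M = 0)
    (h : !![(0:ℂ), 1; 0, 0] * M - M * !![(0:ℂ), 1; 0, 0] = 0) :
    M = (M 0 1) • !![(0:ℂ), 1; 0, 0] := by
  have e00 := congrFun (congrFun h 0) 0
  have e01 := congrFun (congrFun h 0) 1
  have e11 := congrFun (congrFun h 1) 1
  simp [Matrix.mul_apply, Fin.sum_univ_two, Matrix.sub_apply,
    Matrix.vecMul, dotProduct] at e00 e01 e11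
  rw [Matrix.trace_fin_two] at ht
  ext i j
  fin_cases i <;> fin_cases j <;> simp [Matrix.smul_apply]
  · linear_combination (ht - e01) / 2
  · linear_combination e00
  · linear_combination (ht + e01) / 2

/-- Degenerate rank-2 fixed points of the Nahm flow: if `ψ, φ₁, φ₂` are
traceless `2×2` matrices, `φ₀ = E₁₂`, the fixed-point equations hold and
`[φ₀,φ₁] = 0`, then the Higgs field `φ(z) = φ₀ + z φ₁ + z² φ₂` is nilpotent
for every `z`. -/
theorem rank_two_fixed_point_nilpotent
    (ψ φ₁ φ₂ : Matrix (Fin 2) (Fin 2) ℂ)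
    (hψ : Matrix.trace ψ = 0)
    (hφ₁ : Matrix.trace φ₁ = 0)
    (hφ₂ : Matrix.trace φ₂ = 0)
    (φ₀ : Matrix (Fin 2) (Fin 2) ℂ) (hφ₀ : φ₀ = !![0, 1; 0, 0])
    (h0 : ψ * φ₀ - φ₀ * ψ = ((1/2) : ℂ) • (φ₀ * φ₁ - φ₁ * φ₀))
    (h1 : ψ * φ₁ - φ₁ * ψ = φ₀ * φ₂ - φ₂ * φ₀)
    (h2 : ψ * φ₂ - φ₂ * ψ = ((1/2) : ℂ) • (φ₁ * φ₂ - φ₂ * φ₁))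
    (hc : φ₀ * φ₁ - φ₁ * φ₀ = 0) :
    ∀ z : ℂ,
      (φ₀ + z • φ₁ + z ^ 2 • φ₂) * (φ₀ + z • φ₁ + z ^ 2 • φ₂) = 0 := by
  subst hφ₀
  -- φ₁ is a multiple of φ₀
  have hφ₁' := centralizer_E12 φ₁ hφ₁ hc
  -- ψ commutes with φ₀
  have hψc : !![(0:ℂ), 1; 0, 0] * ψ - ψ * !![(0:ℂ), 1; 0, 0] = 0 := by
    rw [hc, smul_zero] at h0
    linear_combination (norm := abel) -h0
  have hψ' := centralizer_E12 ψ hψ hψc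
  -- hence [ψ, φ₁] = 0, so φ₀ commutes with φ₂
  have hE2 : !![(0:ℂ), 1; 0, 0] * !![(0:ℂ), 1; 0, 0] = 0 := by
    ext i j; fin_cases i <;> fin_cases j <;>
      simp [Matrix.mul_apply, Fin.sum_univ_two]
  have hcomm1 : ψ * φ₁ - φ₁ * ψ = 0 := by
    rw [hψ', hφ₁']
    simp [smul_smul, mul_comm, hE2]
  rw [hcomm1] at h1
  have hφ₂' := centralizer_E12 φ₂ hφ₂ (by linear_combination (norm := abel) -h1)
  intro z
  rw [hφ₁', hφ₂']
  ext i j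
  fin_cases i <;> fin_cases j <;>
    simp [Matrix.mul_apply, Fin.sum_univ_two, Matrix.add_apply, Matrix.smul_apply]
end
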